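/- arXiv:2212.02446 — 3 statements merged into one kernel-verified Lean document; each statement's English description precedes it below -/
import Mathlib

section
/- Let a, x₁, x₂, y₁, y₂, b ∈ ℂ². Then the 4×4 complex matrix whose rows are the tensor products a⊗x₁, a⊗x₂, y₁⊗b, y₂⊗b (viewed as vectors in ℂ⁴) has determinant zero. -/
/-!
Choose nonzero `p ⊥ a` and `q ⊥ b` for the bilinear dot product. By the mixed-product rule
`(u ⊗ v) ⬝ (p ⊗ q) = (u ⬝ p)(v ⬝ q)`, the nonzero vector `p ⊗ q` is orthogonal to every row
`a ⊗ xᵢ` and `yᵢ ⊗ b`, so it lies in the kernel of the matrix.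
-/

/-- The Kronecker product of two vectors in `ℂ²`, as a vector in `ℂ⁴`. -/
def kron2 (u v : Fin 2 → ℂ) : Fin 4 → ℂ :=
  ![u 0 * v 0, u 0 * v 1, u 1 * v 0, u 1 * v 1]

lemma kron2_dotProduct_kron2 (u v p q : Fin 2 → ℂ) :
    kron2 u v ⬝ᵥ kron2 p q = (u ⬝ᵥ p) * (v ⬝ᵥ q) := by
  simp only [kron2, dotProduct, Fin.sum_univ_four, Fin.sum_univ_two, Matrix.cons_val]
  ring

lemma kron2_ne_zero {u v : Fin 2 → ℂ} (hu : u ≠ 0) (hv : v ≠ 0) : kron2 u v ≠ 0 := by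
  obtain ⟨i, hi⟩ := Function.ne_iff.mp hu
  obtain ⟨j, hj⟩ := Function.ne_iff.mp hv
  intro h
  have hij : u i * v j = 0 := by
    fin_cases i <;> fin_cases j
    exacts [congrFun h 0, congrFun h 1, congrFun h 2, congrFun h 3]
  exact mul_ne_zero hi hj hij

/-- A 4×4 matrix whose first two rows share the left Kronecker factor `a` and whose
last two rows share the right Kronecker factor `b` is singular. -/
theorem stmt_2 (a x₁ x₂ y₁ y₂ b : Fin 2 → ℂ) :
    Matrix.det (Matrix.of ![kron2 a x₁, kron2 a x₂, kron2 y₁ b, kron2 y₂ b]) = 0 := by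
  obtain ⟨p, hp, hpa⟩ := exists_ne_zero_dotProduct_eq_zero a
  obtain ⟨q, hq, hqb⟩ := exists_ne_zero_dotProduct_eq_zero b
  rw [dotProduct_comm] at hpa hqb
  refine Matrix.exists_mulVec_eq_zero_iff.mp ⟨kron2 p q, kron2_ne_zero hp hq, ?_⟩
  ext i
  fin_cases i <;> simp [Matrix.mulVec, kron2_dotProduct_kron2, hpa, hqb]
end

section
/- Let {|φᵢ⟩ = |aᵢ,₁⟩⊗⋯⊗|aᵢ,ₙ⟩ : i = 1, …, m} be any set of m product vectors in ℂ^{d₁} ⊗ ⋯ ⊗ ℂ^{dₙ}. If m ≤ (d₁ − 1) + (d₂ − 1) + ⋯ + (dₙ − 1), then there exists a nonzero product vector |x₁⟩⊗⋯⊗|xₙ⟩ orthogonal to all |φᵢ⟩. Consequently, every unextendible product basis in ℂ^{d₁} ⊗ ⋯ ⊗ ℂ^{dₙ} has size at least Σᵢ(dᵢ − 1) + 1. -/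
open scoped ComplexInnerProductSpace

variable {n : ℕ} {d : Fin n → ℕ}

/-- The product vector `f₁ ⊗ ⋯ ⊗ fₙ`, realized concretely in `⊗ⱼ ℂ^{dⱼ}`. -/
noncomputable def fineVec (d : Fin n → ℕ) (f : ∀ j : Fin n, Fin (d j) → ℂ) :
    EuclideanSpace ℂ (∀ j : Fin n, Fin (d j)) :=
  WithLp.toLp 2 (fun x => ∏ j : Fin n, f j (x j))

/-- An unextendible product basis in `ℂ^{d₁} ⊗ ⋯ ⊗ ℂ^{dₙ}`: a set of orthonormal product
vectors such that no nonzero product vector is orthogonal to all of them. -/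
def IsUPB (d : Fin n → ℕ) {m : ℕ} (a : Fin m → ∀ j : Fin n, Fin (d j) → ℂ) : Prop :=
  Orthonormal ℂ (fun i => fineVec d (a i)) ∧
    ¬ ∃ f : ∀ j : Fin n, Fin (d j) → ℂ,
        fineVec d f ≠ 0 ∧ ∀ i, ⟪fineVec d (a i), fineVec d f⟫ = 0

/-!
Split the `m` indices into `n` blocks, the `j`-th of size at most `dⱼ - 1`; this is possible
exactly because `m ≤ Σⱼ (dⱼ - 1)`. Fewer than `dⱼ` vectors of `ℂ^{dⱼ}` have a nonzero common
orthogonal vector `xⱼ`, so choose `xⱼ` orthogonal to the `j`-th components of the vectors in block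
`j`. The inner product of two product vectors is the product of the inner products of their
components, so `x₁ ⊗ ⋯ ⊗ xₙ` is orthogonal to every vector of every block.
-/

theorem exists_fiber_card_le {α ι : Type*} [Finite α] [Fintype ι] (c : ι → ℕ)
    (h : Nat.card α ≤ ∑ j, c j) : ∃ f : α → ι, ∀ j, Nat.card {a // f a = j} ≤ c j := by
  have : Fintype α := Fintype.ofFinite α
  obtain ⟨e⟩ : Nonempty (α ↪ Σ j, Fin (c j)) :=
    Function.Embedding.nonempty_of_card_le (by simpa [Nat.card_eq_fintype_card] using h)
  refine ⟨fun a => (e a).1, fun j => ?_⟩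
  calc Nat.card {a // (e a).1 = j}
      ≤ Nat.card {x : Σ j, Fin (c j) // x.1 = j} :=
        Nat.card_le_card_of_injective (Subtype.map e fun _ => id)
          (Subtype.map_injective _ e.injective)
    _ = c j := by simp [Nat.card_congr (Equiv.sigmaSubtype j)]

theorem exists_ne_zero_forall_inner_eq_zero {𝕜 E ι : Type*} [RCLike 𝕜]
    [NormedAddCommGroup E] [InnerProductSpace 𝕜 E] [Finite ι] (v : ι → E)
    (h : Nat.card ι < Module.finrank 𝕜 E) : ∃ x : E, x ≠ 0 ∧ ∀ i, inner 𝕜 (v i) x = 0 := by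
  have : Fintype ι := Fintype.ofFinite ι
  have : FiniteDimensional 𝕜 E := Module.finite_of_finrank_pos (by omega)
  set K := Submodule.span 𝕜 (Set.range v)
  have hK : K ≠ ⊤ := fun hK => by
    have := finrank_le_of_span_eq_top hK
    rw [← Nat.card_eq_fintype_card] at this
    omega
  obtain ⟨x, hxK, hx⟩ := Submodule.exists_mem_ne_zero_of_ne_bot
    (mt Submodule.orthogonal_eq_bot_iff.mp hK)
  exact ⟨x, hx, fun i => (Submodule.mem_orthogonal K x).mp hxK _
    (Submodule.subset_span (Set.mem_range_self i))⟩

theorem inner_fineVec (f g : ∀ j : Fin n, Fin (d j) → ℂ) :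
    ⟪fineVec d f, fineVec d g⟫ =
      ∏ j, ⟪(WithLp.toLp 2 (f j) : EuclideanSpace ℂ (Fin (d j))), WithLp.toLp 2 (g j)⟫ := by
  simp only [fineVec, PiLp.inner_apply, RCLike.inner_apply, map_prod, ← Finset.prod_mul_distrib]
  rw [Fintype.prod_sum]

theorem fineVec_ne_zero {f : ∀ j : Fin n, Fin (d j) → ℂ} (hf : ∀ j, f j ≠ 0) :
    fineVec d f ≠ 0 := by
  choose k hk using fun j => Function.ne_iff.mp (hf j)
  intro h
  have := congrArg (fun v => v.ofLp fun j => k j) h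
  simp only [fineVec, WithLp.ofLp_toLp, WithLp.ofLp_zero, Pi.zero_apply] at this
  exact Finset.prod_ne_zero_iff.mpr (fun j _ => hk j) this

theorem exists_fineVec_ne_zero_forall_inner_eq_zero (hd : ∀ j, 1 ≤ d j) {m : ℕ}
    (a : Fin m → ∀ j : Fin n, Fin (d j) → ℂ) (hm : m ≤ ∑ j, (d j - 1)) :
    ∃ f : ∀ j : Fin n, Fin (d j) → ℂ,
      fineVec d f ≠ 0 ∧ ∀ i, ⟪fineVec d (a i), fineVec d f⟫ = 0 := by
  obtain ⟨block, hblock⟩ := exists_fiber_card_le (α := Fin m) (fun j => d j - 1) (by simpa using hm)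
  have hx (j : Fin n) : ∃ x : EuclideanSpace ℂ (Fin (d j)), x ≠ 0 ∧
      ∀ i : {i // block i = j}, ⟪WithLp.toLp 2 (a i j), x⟫ = 0 :=
    exists_ne_zero_forall_inner_eq_zero _ <| by
      have := hd j
      have := hblock j
      rw [finrank_euclideanSpace_fin]
      omega
  choose x hx0 hx using hx
  refine ⟨fun j => (x j).ofLp, fineVec_ne_zero fun j => ?_, fun i => ?_⟩
  · simpa using hx0 j
  · rw [inner_fineVec]
    exact Finset.prod_eq_zero (Finset.mem_univ (block i)) (hx _ ⟨i, rfl⟩)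

/-- If `m ≤ Σⱼ (dⱼ − 1)` then any `m` product vectors admit a nonzero product vector
orthogonal to all of them; consequently every UPB has size at least `Σⱼ (dⱼ − 1) + 1`. -/
theorem stmt_9 (n : ℕ) (d : Fin n → ℕ) (hd : ∀ j, 1 ≤ d j) :
    (∀ (m : ℕ) (a : Fin m → ∀ j : Fin n, Fin (d j) → ℂ),
      m ≤ ∑ j : Fin n, (d j - 1) →
      ∃ f : ∀ j : Fin n, Fin (d j) → ℂ,
        fineVec d f ≠ 0 ∧ ∀ i : Fin m, ⟪fineVec d (a i), fineVec d f⟫ = 0) ∧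
    (∀ (m : ℕ) (a : Fin m → ∀ j : Fin n, Fin (d j) → ℂ),
      IsUPB d a → (∑ j : Fin n, (d j - 1)) + 1 ≤ m) := by
  refine ⟨fun m a => exists_fineVec_ne_zero_forall_inner_eq_zero hd a, fun m a hUPB => ?_⟩
  by_contra! hm
  exact hUPB.2 (exists_fineVec_ne_zero_forall_inner_eq_zero hd a (by omega))
end

section
/- Let {|φᵢ⟩ : i = 1, …, m} be an unextendible product basis in H = H₁⊗⋯⊗Hₙ with m < dim H, and let ρ = (1/(dim H − m))(I − Σᵢ|φᵢ⟩⟨φᵢ|). Then the range of ρ (equivalently, the orthogonal complement of span{φ₁, …, φₘ}) contains no nonzero product vector. In particular, ρ is not a separable state (it cannot be written as a convex combination of product states). -/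
/-!
Orthonormality of the `φᵢ` gives `⟪φᵢ, Q x⟫ = ⟪φᵢ, x⟫`, so every vector in the range of
`ρ = c • (1 - Q)` is orthogonal to all `φᵢ`; a product vector there would extend the UPB.
If `ρ = ∑ₜ pₜ |gₜ⟩⟨gₜ|`, then `0 = ⟪φᵢ, ρ φᵢ⟫ = ∑ₜ pₜ |⟪φᵢ, gₜ⟫|²`, so each `gₜ` with `pₜ > 0`
is a unit product vector orthogonal to every `φᵢ`, again contradicting unextendibility.
-/

open scoped ComplexInnerProductSpace

variable {n : ℕ} {d : Fin n → ℕ}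

open Matrix WithLp

section
variable {𝕜 ι κ : Type*} [RCLike 𝕜] [Fintype ι] [Fintype κ]

lemma inner_toLp_vecMulVec_mulVec (u v : EuclideanSpace 𝕜 ι) (x : ι → 𝕜) :
    inner 𝕜 u (toLp 2 (vecMulVec (ofLp v) (star (ofLp v)) *ᵥ x))
      = inner 𝕜 u v * inner 𝕜 v (toLp 2 x) := by
  rw [vecMulVec_mulVec, op_smul_eq_smul, toLp_smul, toLp_ofLp, inner_smul_right, mul_comm,
    dotProduct_comm]
  rfl

lemma inner_sum_vecMulVec_mulVec {φ : κ → EuclideanSpace 𝕜 ι}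
    (hφ : Orthonormal 𝕜 φ) (i : κ) (x : ι → 𝕜) :
    inner 𝕜 (φ i) (toLp 2 ((∑ j, vecMulVec (ofLp (φ j)) (star (ofLp (φ j)))) *ᵥ x))
      = inner 𝕜 (φ i) (toLp 2 x) := by
  classical
  simp [sum_mulVec, toLp_sum, inner_sum, inner_toLp_vecMulVec_mulVec,
    orthonormal_iff_ite.mp hφ]

lemma inner_smul_one_sub_sum_vecMulVec_mulVec [DecidableEq ι] {φ : κ → EuclideanSpace 𝕜 ι}
    (hφ : Orthonormal 𝕜 φ) (c : 𝕜) (i : κ) (x : ι → 𝕜) :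
    inner 𝕜 (φ i)
      (toLp 2 ((c • (1 - ∑ j, vecMulVec (ofLp (φ j)) (star (ofLp (φ j))))) *ᵥ x)) = 0 := by
  rw [smul_mulVec, sub_mulVec, one_mulVec, toLp_smul, toLp_sub, inner_smul_right, inner_sub_right,
    inner_sum_vecMulVec_mulVec hφ, sub_self, mul_zero]

lemma inner_sum_smul_vecMulVec_mulVec_self (u : EuclideanSpace 𝕜 ι) (p : κ → ℝ)
    (g : κ → EuclideanSpace 𝕜 ι) :
    inner 𝕜 u (toLp 2 ((∑ t, (p t : 𝕜) • vecMulVec (ofLp (g t)) (star (ofLp (g t)))) *ᵥ ofLp u))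
      = ((∑ t, p t * ‖inner 𝕜 u (g t)‖ ^ 2 : ℝ) : 𝕜) := by
  simp only [sum_mulVec, smul_mulVec, toLp_sum, toLp_smul, inner_sum, inner_smul_right,
    inner_toLp_vecMulVec_mulVec, toLp_ofLp]
  push_cast
  refine Finset.sum_congr rfl fun t _ => ?_
  rw [← inner_conj_symm u (g t), RCLike.conj_mul, RCLike.norm_conj]

lemma inner_eq_zero_of_inner_sum_smul_vecMulVec_mulVec_self {u : EuclideanSpace 𝕜 ι}
    {p : κ → ℝ} {g : κ → EuclideanSpace 𝕜 ι} (hp : ∀ t, 0 ≤ p t)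
    (h : inner 𝕜 u
      (toLp 2 ((∑ t, (p t : 𝕜) • vecMulVec (ofLp (g t)) (star (ofLp (g t)))) *ᵥ ofLp u)) = 0)
    {t : κ} (ht : 0 < p t) : inner 𝕜 u (g t) = 0 := by
  rw [inner_sum_smul_vecMulVec_mulVec_self, RCLike.ofReal_eq_zero,
    Finset.sum_eq_zero_iff_of_nonneg fun t _ => mul_nonneg (hp t) (sq_nonneg _)] at h
  simpa [ht.ne'] using h t (Finset.mem_univ t)

end

theorem stmt_14_general (n m : ℕ) (d : Fin n → ℕ)
    (a : Fin m → ∀ j : Fin n, Fin (d j) → ℂ)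
    (horth : Orthonormal ℂ (fun i => fineVec d (a i)))
    (hUPB : ¬ ∃ f : ∀ j : Fin n, Fin (d j) → ℂ,
        fineVec d f ≠ 0 ∧ ∀ i : Fin m, ⟪fineVec d (a i), fineVec d f⟫ = 0) :
    let D : ℕ := Fintype.card (∀ j : Fin n, Fin (d j))
    let Q : Matrix (∀ j : Fin n, Fin (d j)) (∀ j : Fin n, Fin (d j)) ℂ :=
      ∑ i : Fin m, Matrix.vecMulVec (fineVec d (a i)) (star (fineVec d (a i)))
    let ρ : Matrix (∀ j : Fin n, Fin (d j)) (∀ j : Fin n, Fin (d j)) ℂ :=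
      ((D : ℂ) - (m : ℂ))⁻¹ • (1 - Q)
    (∀ f : ∀ j : Fin n, Fin (d j) → ℂ,
        (∃ x : (∀ j : Fin n, Fin (d j)) → ℂ, ρ.mulVec x = fineVec d f) →
        fineVec d f = 0) ∧
    ¬ ∃ (k : ℕ) (p : Fin k → ℝ) (g : Fin k → ∀ j : Fin n, Fin (d j) → ℂ),
        (∀ t, 0 ≤ p t) ∧ (∑ t, p t = 1) ∧ (∀ t, ‖fineVec d (g t)‖ = 1) ∧
        ρ = ∑ t : Fin k,
          (p t : ℂ) • Matrix.vecMulVec (fineVec d (g t)) (star (fineVec d (g t))) := by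
  intro D Q ρ
  have hρ (i : Fin m) (x) : ⟪fineVec d (a i), toLp 2 (ρ *ᵥ x)⟫ = 0 :=
    inner_smul_one_sub_sum_vecMulVec_mulVec horth _ i x
  refine ⟨fun f ⟨x, hx⟩ => ?_, fun ⟨k, p, g, hp, hp1, hg, hρg⟩ => ?_⟩
  · by_contra hf
    exact hUPB ⟨f, hf, fun i => by simpa [hx] using hρ i x⟩
  · obtain ⟨t, -, ht⟩ : ∃ t ∈ Finset.univ, 0 < p t :=
      Finset.exists_lt_of_sum_lt (by simp [hp1])
    refine hUPB ⟨g t, norm_ne_zero_iff.mp (by simp [hg]), fun i => ?_⟩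
    refine inner_eq_zero_of_inner_sum_smul_vecMulVec_mulVec_self
      (g := fun t => fineVec d (g t)) hp ?_ ht
    have hρφ := hρ i (fineVec d (a i))
    rw [hρg] at hρφ
    -- `exact`, not `simpa`: the casts `Complex.ofReal` and `RCLike.ofReal` agree only up to unfolding
    exact hρφ

/-- If `{φᵢ}` is a UPB, then the range of `ρ = (I − Σᵢ|φᵢ⟩⟨φᵢ|)/(D−m)` contains no
nonzero product vector; in particular `ρ` is not separable. -/
theorem stmt_14 (n m : ℕ) (d : Fin n → ℕ)
    (a : Fin m → ∀ j : Fin n, Fin (d j) → ℂ)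
    (hm : m < Fintype.card (∀ j : Fin n, Fin (d j)))
    (horth : Orthonormal ℂ (fun i => fineVec d (a i)))
    (hUPB : ¬ ∃ f : ∀ j : Fin n, Fin (d j) → ℂ,
        fineVec d f ≠ 0 ∧ ∀ i : Fin m, ⟪fineVec d (a i), fineVec d f⟫ = 0) :
    let D : ℕ := Fintype.card (∀ j : Fin n, Fin (d j))
    let Q : Matrix (∀ j : Fin n, Fin (d j)) (∀ j : Fin n, Fin (d j)) ℂ :=
      ∑ i : Fin m, Matrix.vecMulVec (fineVec d (a i)) (star (fineVec d (a i)))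
    let ρ : Matrix (∀ j : Fin n, Fin (d j)) (∀ j : Fin n, Fin (d j)) ℂ :=
      ((D : ℂ) - (m : ℂ))⁻¹ • (1 - Q)
    (∀ f : ∀ j : Fin n, Fin (d j) → ℂ,
        (∃ x : (∀ j : Fin n, Fin (d j)) → ℂ, ρ.mulVec x = fineVec d f) →
        fineVec d f = 0) ∧
    ¬ ∃ (k : ℕ) (p : Fin k → ℝ) (g : Fin k → ∀ j : Fin n, Fin (d j) → ℂ),
        (∀ t, 0 ≤ p t) ∧ (∑ t, p t = 1) ∧ (∀ t, ‖fineVec d (g t)‖ = 1) ∧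
        ρ = ∑ t : Fin k,
          (p t : ℂ) • Matrix.vecMulVec (fineVec d (g t)) (star (fineVec d (g t))) :=
  stmt_14_general n m d a horth hUPB
end
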